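/- For the map x: ℂ → S⁶ defined in the previous statement, the conformal factor satisfies |∂_z x|² = (2 + 8r² + r⁴/2 + 4r⁶/9 + 8r⁸/9 + r¹⁰/18 + 2r¹²/81)/(1 + r² + 5r⁴/4 + 4r⁶/9 + r⁸/36)², and this quantity is strictly positive for all z ∈ ℂ; hence x is an immersion on ℂ. -/

import Mathlib

open Complex

noncomputable def Dfun (z : ℂ) : ℂ :=
  1 + (‖z‖ : ℂ) ^ 2 + 5 * (‖z‖ : ℂ) ^ 4 / 4
    + 4 * (‖z‖ : ℂ) ^ 6 / 9 + (‖z‖ : ℂ) ^ 8 / 36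

noncomputable def xmap (z : ℂ) : Fin 7 → ℂ :=
  let r : ℂ := (‖z‖ : ℂ)
  (Dfun z)⁻¹ • ![
    1 - r ^ 2 - 3 * r ^ 4 / 4 + 4 * r ^ 6 / 9 - r ^ 8 / 36,
    -I * (z - (starRingEnd ℂ) z) * (1 + r ^ 6 / 9),
    (z + (starRingEnd ℂ) z) * (1 + r ^ 6 / 9),
    -I * (z ^ 2 - ((starRingEnd ℂ) z) ^ 2) * (1 - r ^ 4 / 12),
    (z ^ 2 + ((starRingEnd ℂ) z) ^ 2) * (1 - r ^ 4 / 12),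
    -I * (r ^ 2 / 2) * (z - (starRingEnd ℂ) z) * (1 + 4 * r ^ 2 / 3),
    (r ^ 2 / 2) * (z + (starRingEnd ℂ) z) * (1 + 4 * r ^ 2 / 3)]

/-- The Wirtinger derivative `∂_z F = ½(∂_x F - i ∂_y F)` of a map `F : ℂ → ℂ`. -/
noncomputable def wirtZ (F : ℂ → ℂ) (z : ℂ) : ℂ :=
  (1 / 2 : ℂ) * (fderiv ℝ F z 1 - Complex.I * fderiv ℝ F z Complex.I)

/-!
Every component of `x` is a monomial in `w, w̄` times a radial profile `ψ(s)`, `s = |w|²`, where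
`ψ` is a quartic in `s` divided by `D`: `x₀ = ψ₀(s)`, and the other components come in pairs
`-i(wⁿ - w̄ⁿ)ψ(s)`, `(wⁿ + w̄ⁿ)ψ(s)`. Since `∂_z ψ(|w|²) = w̄ ψ'(s)`, the derivatives of such a pair
are `-i(A - B)` and `A + B` with `A = wⁿ⁻¹(nψ + sψ')` and `B = w̄ⁿ⁺¹ψ'`, so by the parallelogram
law the pair contributes `2|A|² + 2|B|²`, which depends on `s` only. The conformal factor thus
reduces to a rational identity in the single variable `s`, and it is positive because `D > 0`.
-/

open ComplexConjugate

section Wirtinger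

variable {F G : ℂ → ℂ} {z : ℂ}

lemma wirtZ_add (hF : DifferentiableAt ℝ F z) (hG : DifferentiableAt ℝ G z) :
    wirtZ (fun w => F w + G w) z = wirtZ F z + wirtZ G z := by
  simp only [wirtZ, fderiv_fun_add hF hG, add_apply]
  ring

lemma wirtZ_sub (hF : DifferentiableAt ℝ F z) (hG : DifferentiableAt ℝ G z) :
    wirtZ (fun w => F w - G w) z = wirtZ F z - wirtZ G z := by
  simp only [wirtZ, fderiv_fun_sub hF hG, sub_apply]
  ring

lemma wirtZ_const_mul (c : ℂ) (hF : DifferentiableAt ℝ F z) :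
    wirtZ (fun w => c * F w) z = c * wirtZ F z := by
  simp only [wirtZ, fderiv_const_mul hF, smul_apply, smul_eq_mul]
  ring

lemma wirtZ_mul (hF : DifferentiableAt ℝ F z) (hG : DifferentiableAt ℝ G z) :
    wirtZ (fun w => F w * G w) z = F z * wirtZ G z + G z * wirtZ F z := by
  simp only [wirtZ, fderiv_fun_mul hF hG, add_apply, smul_apply, smul_eq_mul]
  ring

lemma HasDerivAt.wirtZ_eq {F' : ℂ} (h : HasDerivAt F F' z) : wirtZ F z = F' := by
  simp only [wirtZ, h.complexToReal_fderiv.fderiv, smul_apply, one_apply_eq_self, smul_eq_mul]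
  linear_combination (-F' / 2) * I_sq

lemma HasDerivAt.wirtZ_conj_eq_zero {F' : ℂ} (h : HasDerivAt F F' z) :
    wirtZ (fun w => conj (F w)) z = 0 := by
  have hc : HasFDerivAt (fun w => conj (F w)) (conjCLE.toContinuousLinearMap.comp (F' • 1)) z :=
    conjCLE.toContinuousLinearMap.hasFDerivAt.comp z h.complexToReal_fderiv
  simp only [wirtZ, hc.fderiv, ContinuousLinearMap.comp_apply, smul_apply, one_apply_eq_self,
    smul_eq_mul, ContinuousLinearEquiv.coe_coe, conjCLE_apply, map_mul, map_one, conj_I]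
  linear_combination conj F' / 2 * I_sq

lemma hasFDerivAt_normSq (z : ℂ) : HasFDerivAt (fun w => normSq w) (2 • innerSL ℝ z) z := by
  simpa only [normSq_eq_norm_sq] using (hasStrictFDerivAt_norm_sq z).hasFDerivAt

variable {ψ : ℝ → ℝ} {ψ' : ℝ}

lemma wirtZ_ofReal_comp_normSq (h : HasDerivAt ψ ψ' (normSq z)) :
    wirtZ (fun w => (ψ (normSq w) : ℂ)) z = ψ' * conj z := by
  have hc : HasFDerivAt (fun w => (ψ (normSq w) : ℂ))
      (ofRealCLM.comp ((ContinuousLinearMap.toSpanSingleton ℝ ψ').comp (2 • innerSL ℝ z))) z :=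
    ofRealCLM.hasFDerivAt.comp z (h.hasFDerivAt.comp z (hasFDerivAt_normSq z))
  conv_rhs => rw [← re_add_im z]
  simp only [wirtZ, hc.fderiv, ContinuousLinearMap.comp_apply, ofRealCLM_apply, smul_apply,
    ContinuousLinearMap.toSpanSingleton_apply, coe_innerSL_apply, Complex.inner, smul_eq_mul,
    nsmul_eq_mul, one_mul, mul_re, I_re, I_im, conj_re, conj_im, map_add, map_mul, conj_ofReal,
    conj_I]
  push_cast
  ring

lemma wirtZ_mul_ofReal_comp_normSq (hF : DifferentiableAt ℝ F z)
    (h : HasDerivAt ψ ψ' (normSq z)) :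
    wirtZ (fun w => F w * ψ (normSq w)) z = F z * (ψ' * conj z) + ψ (normSq z) * wirtZ F z := by
  have hψ : DifferentiableAt ℝ (fun w => (ψ (normSq w) : ℂ)) z :=
    ofRealCLM.differentiableAt.comp z
      (h.differentiableAt.comp z (hasFDerivAt_normSq z).differentiableAt)
  rw [wirtZ_mul hF hψ, wirtZ_ofReal_comp_normSq h]

lemma normSq_wirtZ_pow_conj_pow_pair {n : ℕ} (hn : n ≠ 0) (h : HasDerivAt ψ ψ' (normSq z)) :
    normSq (wirtZ (fun w => -I * (w ^ n - conj w ^ n) * ψ (normSq w)) z)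
      + normSq (wirtZ (fun w => (w ^ n + conj w ^ n) * ψ (normSq w)) z)
      = 2 * normSq z ^ (n - 1) * (n * ψ (normSq z) + normSq z * ψ') ^ 2
        + 2 * normSq z ^ (n + 1) * ψ' ^ 2 := by
  have hpow : HasDerivAt (fun w => w ^ n) (n * z ^ (n - 1)) z := hasDerivAt_pow n z
  have hdpow : DifferentiableAt ℝ (fun w : ℂ => w ^ n) z := by fun_prop
  have hdconj : DifferentiableAt ℝ (fun w : ℂ => conj w ^ n) z := by fun_prop
  have hconj : wirtZ (fun w => conj w ^ n) z = 0 := by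
    simpa only [map_pow] using hpow.wirtZ_conj_eq_zero
  rw [wirtZ_mul_ofReal_comp_normSq (by fun_prop) h, wirtZ_mul_ofReal_comp_normSq (by fun_prop) h,
    wirtZ_const_mul (F := fun w => w ^ n - conj w ^ n) _ (by fun_prop), wirtZ_sub hdpow hdconj,
    wirtZ_add hdpow hdconj, hpow.wirtZ_eq, hconj]
  obtain ⟨m, rfl⟩ := Nat.exists_eq_add_one_of_ne_zero hn
  set A : ℂ := z ^ m * ((m + 1 : ℝ) * ψ (normSq z) + normSq z * ψ' : ℝ)
  set B : ℂ := conj z ^ (m + 2) * ψ'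
  have hsub : -I * (z ^ (m + 1) - conj z ^ (m + 1)) * (ψ' * conj z)
      + ψ (normSq z) * (-I * (((m + 1 : ℕ) : ℂ) * z ^ (m + 1 - 1) - 0)) = -I * (A - B) := by
    simp only [A, B]; push_cast; rw [← mul_conj]; ring
  have hadd : (z ^ (m + 1) + conj z ^ (m + 1)) * (ψ' * conj z)
      + ψ (normSq z) * (((m + 1 : ℕ) : ℂ) * z ^ (m + 1 - 1) + 0) = A + B := by
    simp only [A, B]; push_cast; rw [← mul_conj]; ring
  rw [hsub, hadd, normSq_mul, normSq_neg, normSq_I, one_mul, normSq_sub, normSq_add]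
  simp only [A, B, normSq_mul, map_pow, normSq_ofReal, normSq_conj]
  push_cast
  ring

end Wirtinger

noncomputable def quartic (a b c d e s : ℝ) : ℝ := a + b * s + c * s ^ 2 + d * s ^ 3 + e * s ^ 4

noncomputable def quarticDeriv (b c d e s : ℝ) : ℝ := b + 2 * c * s + 3 * d * s ^ 2 + 4 * e * s ^ 3

lemma hasDerivAt_quartic (a b c d e s : ℝ) :
    HasDerivAt (quartic a b c d e) (quarticDeriv b c d e s) s := by
  have h := (((((hasDerivAt_id s).const_mul b).const_add a).add
    ((hasDerivAt_pow 2 s).const_mul c)).add ((hasDerivAt_pow 3 s).const_mul d)).add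
    ((hasDerivAt_pow 4 s).const_mul e)
  refine (h.congr_deriv ?_).congr_of_eventuallyEq (.of_forall fun t => ?_)
  · simp only [quarticDeriv, Nat.cast_ofNat, Nat.reduceSub]
    ring
  · simp only [quartic, Pi.add_apply, id]

/-- `D` as a function of `s = r²`. -/
noncomputable def denom : ℝ → ℝ := quartic 1 1 (5 / 4) (4 / 9) (1 / 36)

lemma denom_pos {s : ℝ} (hs : 0 ≤ s) : 0 < denom s := by
  unfold denom quartic
  positivity

noncomputable def profile (a b c d e s : ℝ) : ℝ := quartic a b c d e s / denom s

noncomputable def profileDeriv (a b c d e s : ℝ) : ℝ :=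
  (quarticDeriv b c d e s * denom s
    - quartic a b c d e s * quarticDeriv 1 (5 / 4) (4 / 9) (1 / 36) s) / denom s ^ 2

lemma hasDerivAt_profile (a b c d e : ℝ) {s : ℝ} (hs : 0 ≤ s) :
    HasDerivAt (profile a b c d e) (profileDeriv a b c d e s) s :=
  (hasDerivAt_quartic a b c d e s).div (hasDerivAt_quartic 1 1 (5 / 4) (4 / 9) (1 / 36) s)
    (denom_pos hs).ne'

-- The exponents `w ^ 1` let `normSq_wirtZ_pow_conj_pow_pair` apply with `n = 1`.
lemma xmap_eq_profiles (w : ℂ) :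
    xmap w = ![(profile 1 (-1) (-3 / 4) (4 / 9) (-1 / 36) (normSq w) : ℂ),
      -I * (w ^ 1 - conj w ^ 1) * profile 1 0 0 (1 / 9) 0 (normSq w),
      (w ^ 1 + conj w ^ 1) * profile 1 0 0 (1 / 9) 0 (normSq w),
      -I * (w ^ 2 - conj w ^ 2) * profile 1 0 (-1 / 12) 0 0 (normSq w),
      (w ^ 2 + conj w ^ 2) * profile 1 0 (-1 / 12) 0 0 (normSq w),
      -I * (w ^ 1 - conj w ^ 1) * profile 0 (1 / 2) (2 / 3) 0 0 (normSq w),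
      (w ^ 1 + conj w ^ 1) * profile 0 (1 / 2) (2 / 3) 0 0 (normSq w)] := by
  have hr : ((‖w‖ : ℝ) : ℂ) ^ 2 = (normSq w : ℂ) := by rw [normSq_eq_norm_sq]; push_cast; rfl
  ext j
  fin_cases j <;>
  · simp only [xmap, Dfun, profile, denom, quartic, Matrix.smul_cons, Matrix.smul_empty,
      smul_eq_mul, Fin.zero_eta, Fin.mk_one, Fin.reduceFinMk, Matrix.cons_val_zero,
      Matrix.cons_val_one, Matrix.cons_val]
    push_cast [← hr]
    ring

noncomputable def conformalFactor (s : ℝ) : ℝ :=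
  (2 + 8 * s + s ^ 2 / 2 + 4 * s ^ 3 / 9 + 8 * s ^ 4 / 9 + s ^ 5 / 18 + 2 * s ^ 6 / 81)
    / denom s ^ 2

lemma conformalFactor_pos {s : ℝ} (hs : 0 ≤ s) : 0 < conformalFactor s := by
  unfold conformalFactor
  have := denom_pos hs
  positivity

lemma conformalFactor_eq_radial_sum {s : ℝ} (hs : 0 ≤ s) :
    conformalFactor s = s * profileDeriv 1 (-1) (-3 / 4) (4 / 9) (-1 / 36) s ^ 2
      + (2 * (profile 1 0 0 (1 / 9) 0 s + s * profileDeriv 1 0 0 (1 / 9) 0 s) ^ 2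
        + 2 * s ^ 2 * profileDeriv 1 0 0 (1 / 9) 0 s ^ 2)
      + (2 * s * (2 * profile 1 0 (-1 / 12) 0 0 s + s * profileDeriv 1 0 (-1 / 12) 0 0 s) ^ 2
        + 2 * s ^ 3 * profileDeriv 1 0 (-1 / 12) 0 0 s ^ 2)
      + (2 * (profile 0 (1 / 2) (2 / 3) 0 0 s + s * profileDeriv 0 (1 / 2) (2 / 3) 0 0 s) ^ 2
        + 2 * s ^ 2 * profileDeriv 0 (1 / 2) (2 / 3) 0 0 s ^ 2) := by
  have := (denom_pos hs).ne'
  simp only [conformalFactor, profile, profileDeriv]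
  field_simp
  simp only [denom, quartic, quarticDeriv]
  ring

/-- The conformal factor `|∂_z x|²` of `x` has the stated explicit form and is strictly
positive everywhere; hence `x` is an immersion on ℂ. -/
theorem xmap_conformal_factor (z : ℂ) :
    (∑ j, Complex.normSq (wirtZ (fun w => xmap w j) z))
      = (2 + 8 * ‖z‖ ^ 2 + ‖z‖ ^ 4 / 2 + 4 * ‖z‖ ^ 6 / 9
          + 8 * ‖z‖ ^ 8 / 9 + ‖z‖ ^ 10 / 18
          + 2 * ‖z‖ ^ 12 / 81)
        / (1 + ‖z‖ ^ 2 + 5 * ‖z‖ ^ 4 / 4 + 4 * ‖z‖ ^ 6 / 9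
            + ‖z‖ ^ 8 / 36) ^ 2 ∧
    0 < ∑ j, Complex.normSq (wirtZ (fun w => xmap w j) z) := by
  set a : Fin 7 → ℝ := fun j => normSq (wirtZ (fun w => xmap w j) z)
  have hs := normSq_nonneg z
  have hpairs : ∑ j, a j = a 0 + (a 1 + a 2) + (a 3 + a 4) + (a 5 + a 6) := by
    rw [Fin.sum_univ_seven]
    ring
  have key : ∑ j, a j = conformalFactor (normSq z) := by
    rw [hpairs]
    simp only [a, xmap_eq_profiles, Matrix.cons_val_zero, Matrix.cons_val_one, Matrix.cons_val]
    rw [wirtZ_ofReal_comp_normSq (hasDerivAt_profile _ _ _ _ _ hs),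
      normSq_wirtZ_pow_conj_pow_pair one_ne_zero (hasDerivAt_profile _ _ _ _ _ hs),
      normSq_wirtZ_pow_conj_pow_pair two_ne_zero (hasDerivAt_profile _ _ _ _ _ hs),
      normSq_wirtZ_pow_conj_pow_pair one_ne_zero (hasDerivAt_profile _ _ _ _ _ hs),
      conformalFactor_eq_radial_sum hs, normSq_mul, normSq_ofReal, normSq_conj]
    push_cast
    ring
  refine ⟨?_, key ▸ conformalFactor_pos hs⟩
  rw [key, normSq_eq_norm_sq]
  simp only [conformalFactor, denom, quartic]
  ring
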